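/- arXiv:2305.07172 — 2 statements merged into one kernel-verified Lean document; each statement's English description precedes it below -/
import Mathlib

section
/- The Bar-Natan Frobenius algebra satisfies the Frobenius compatibility law: as R-linear maps A ⊗_R A → A ⊗_R A one has Δ ∘ m = (m ⊗ id_A) ∘ (id_A ⊗ Δ) = (id_A ⊗ m) ∘ (Δ ⊗ id_A), where the middle and right compositions use the canonical associator isomorphisms of triple tensor products. -/
/-! Under the identifications `(A ⊗ A) ⊗ A ≅ A ⊗ (A ⊗ A)`, the two composites send `a ⊗ b` to
`(a ⊗ 1) · Δ b` and `Δ a · (1 ⊗ b)`, so the Frobenius law says that `Δ` is a map of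
`A`-bimodules. As `A` is spanned over `R` by `1` and `X`, this reduces to the identities
`Δ (X b) = (X ⊗ 1) Δ b` and `Δ (a X) = Δ a (1 ⊗ X)` for `a, b ∈ {1, X}`, which hold because
`X² = Q X` and `2 = 0`. -/

open Polynomial TensorProduct

noncomputable section

/-- `R = 𝔽₂[Q]/(Q²)`, the dual numbers over the field with two elements. -/
abbrev R2 : Type := DualNumber (ZMod 2)

/-- The element `Q ∈ R` with `Q² = 0`. -/
noncomputable def Qe : R2 := DualNumber.eps

/-- The polynomial `X² - Q·X` over `R`. -/
noncomputable def BNpoly : Polynomial R2 := X ^ 2 - C Qe * X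

/-- The Bar-Natan Frobenius algebra `A = R[X]/(X² - Q·X)`. -/
abbrev BN : Type := AdjoinRoot BNpoly

/-- The class of `X` in `A`. -/
noncomputable def Xa : BN := AdjoinRoot.root BNpoly

section Frobenius

variable {R A : Type*} [CommSemiring R] [CommSemiring A] [Algebra R A]

theorem TensorProduct.map_mul'_id_assoc_symm_tmul (a : A) (w : A ⊗[R] A) :
    map (LinearMap.mul' R A) LinearMap.id ((TensorProduct.assoc R A A A).symm (a ⊗ₜ w)) =
      (a ⊗ₜ 1) * w := by
  induction w using TensorProduct.induction_on with
  | zero => simp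
  | tmul c d => simp
  | add x y hx hy => simp only [tmul_add, map_add, hx, hy, mul_add]

theorem TensorProduct.map_id_mul'_assoc_tmul (w : A ⊗[R] A) (b : A) :
    map LinearMap.id (LinearMap.mul' R A) (TensorProduct.assoc R A A A (w ⊗ₜ b)) =
      w * (1 ⊗ₜ b) := by
  induction w using TensorProduct.induction_on with
  | zero => simp
  | tmul c d => simp
  | add x y hx hy => simp only [add_tmul, map_add, hx, hy, add_mul]

theorem apply_mul'_eq_map_mul'_id_assoc_symm {Δ : A →ₗ[R] A ⊗[R] A}
    (hΔ : ∀ a b, Δ (a * b) = (a ⊗ₜ 1) * Δ b) (z : A ⊗[R] A) :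
    Δ (LinearMap.mul' R A z) =
      map (LinearMap.mul' R A) LinearMap.id
        ((TensorProduct.assoc R A A A).symm (map LinearMap.id Δ z)) := by
  induction z using TensorProduct.induction_on with
  | zero => simp
  | tmul a b => simp [hΔ, map_mul'_id_assoc_symm_tmul]
  | add x y hx hy => simp only [map_add, hx, hy]

theorem apply_mul'_eq_map_id_mul'_assoc {Δ : A →ₗ[R] A ⊗[R] A}
    (hΔ : ∀ a b, Δ (a * b) = Δ a * (1 ⊗ₜ b)) (z : A ⊗[R] A) :
    Δ (LinearMap.mul' R A z) =
      map LinearMap.id (LinearMap.mul' R A)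
        (TensorProduct.assoc R A A A (map Δ LinearMap.id z)) := by
  induction z using TensorProduct.induction_on with
  | zero => simp
  | tmul a b => simp [hΔ, map_id_mul'_assoc_tmul]
  | add x y hx hy => simp only [map_add, hx, hy]

end Frobenius

theorem AdjoinRoot.linearMap_ext_of_natDegree_eq_two {R M : Type*} [CommRing R]
    [AddCommMonoid M] [Module R M] {g : R[X]} (hg : g.Monic) (h2 : g.natDegree = 2)
    {f f' : AdjoinRoot g →ₗ[R] M}
    (h1 : f 1 = f' 1) (hroot : f (root g) = f' (root g)) : f = f' := by
  refine (AdjoinRoot.powerBasis' hg).basis.ext fun i => ?_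
  rw [PowerBasis.basis_eq_pow, AdjoinRoot.powerBasis'_gen]
  obtain ⟨i, hi⟩ := i
  simp only [AdjoinRoot.powerBasis'_dim, h2] at hi
  interval_cases i
  · simpa using h1
  · simpa using hroot

theorem BNpoly_monic : BNpoly.Monic := by
  unfold BNpoly
  exact monic_X_pow_sub (degree_C_mul_X_le Qe |>.trans_lt (by decide))

theorem BNpoly_natDegree : BNpoly.natDegree = 2 := by
  unfold BNpoly
  compute_degree!

theorem Xa_mul_Xa : Xa * Xa = Qe • Xa := by
  have h : eval₂ (AdjoinRoot.of BNpoly) Xa (X ^ 2 - C Qe * X) = 0 :=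
    AdjoinRoot.eval₂_root BNpoly
  simp only [eval₂_sub, eval₂_pow, eval₂_mul, eval₂_C, eval₂_X, sub_eq_zero] at h
  rw [← sq, h]
  exact (Algebra.smul_def Qe Xa).symm

theorem R2.two_eq_zero : (2 : R2) = 0 := by
  ext <;> rfl

theorem R2.add_self_eq_zero {M : Type*} [AddCommGroup M] [Module R2 M] (x : M) : x + x = 0 := by
  rw [← two_smul R2, R2.two_eq_zero, zero_smul]

theorem BN.linearMap_ext {M : Type*} [AddCommMonoid M] [Module R2 M] {f f' : BN →ₗ[R2] M}
    (h1 : f 1 = f' 1) (hXa : f Xa = f' Xa) : f = f' :=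
  AdjoinRoot.linearMap_ext_of_natDegree_eq_two BNpoly_monic BNpoly_natDegree h1 hXa

section Comultiplication

variable {Δ : BN →ₗ[R2] BN ⊗[R2] BN}

theorem map_Xa_mul
    (hΔ1 : Δ 1 = (1 : BN) ⊗ₜ[R2] Xa + Xa ⊗ₜ[R2] (1 : BN) + Qe • ((1 : BN) ⊗ₜ[R2] (1 : BN)))
    (hΔX : Δ Xa = Xa ⊗ₜ[R2] Xa) (b : BN) : Δ (Xa * b) = (Xa ⊗ₜ 1) * Δ b := by
  suffices Δ ∘ₗ LinearMap.mulLeft R2 Xa = LinearMap.mulLeft R2 (Xa ⊗ₜ[R2] (1 : BN)) ∘ₗ Δ from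
    LinearMap.congr_fun this b
  refine BN.linearMap_ext ?_ ?_
  · simp only [LinearMap.comp_apply, LinearMap.mulLeft_apply, mul_one, hΔX, hΔ1, mul_add,
      Algebra.TensorProduct.tmul_mul_tmul, one_mul, Xa_mul_Xa, smul_tmul', mul_smul_comm]
    rw [add_assoc, R2.add_self_eq_zero, add_zero]
  · simp [hΔX, Xa_mul_Xa, smul_tmul']

theorem map_mul_eq_tmul_one_mul (hXa : ∀ b, Δ (Xa * b) = (Xa ⊗ₜ 1) * Δ b) (a b : BN) :
    Δ (a * b) = (a ⊗ₜ 1) * Δ b := by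
  suffices Δ ∘ₗ LinearMap.mulRight R2 b =
      LinearMap.mulRight R2 (Δ b) ∘ₗ Algebra.TensorProduct.includeLeft.toLinearMap from
    LinearMap.congr_fun this a
  refine BN.linearMap_ext ?_ ?_
  · simp [← Algebra.TensorProduct.one_def]
  · simpa using hXa b

theorem map_mul_Xa
    (hΔ1 : Δ 1 = (1 : BN) ⊗ₜ[R2] Xa + Xa ⊗ₜ[R2] (1 : BN) + Qe • ((1 : BN) ⊗ₜ[R2] (1 : BN)))
    (hΔX : Δ Xa = Xa ⊗ₜ[R2] Xa) (a : BN) : Δ (a * Xa) = Δ a * (1 ⊗ₜ Xa) := by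
  suffices Δ ∘ₗ LinearMap.mulRight R2 Xa = LinearMap.mulRight R2 ((1 : BN) ⊗ₜ[R2] Xa) ∘ₗ Δ from
    LinearMap.congr_fun this a
  refine BN.linearMap_ext ?_ ?_
  · simp only [LinearMap.comp_apply, LinearMap.mulRight_apply, one_mul, hΔX, hΔ1, add_mul,
      Algebra.TensorProduct.tmul_mul_tmul, mul_one, Xa_mul_Xa, tmul_smul, smul_mul_assoc]
    rw [add_right_comm, R2.add_self_eq_zero, zero_add]
  · simp [hΔX, Xa_mul_Xa, tmul_smul]

theorem map_mul_eq_mul_one_tmul (hXa : ∀ a, Δ (a * Xa) = Δ a * (1 ⊗ₜ Xa)) (a b : BN) :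
    Δ (a * b) = Δ a * (1 ⊗ₜ b) := by
  suffices Δ ∘ₗ LinearMap.mulLeft R2 a =
      LinearMap.mulLeft R2 (Δ a) ∘ₗ Algebra.TensorProduct.includeRight.toLinearMap from
    LinearMap.congr_fun this b
  refine BN.linearMap_ext ?_ ?_
  · simp [← Algebra.TensorProduct.one_def]
  · simpa using hXa a

end Comultiplication

/-- the Frobenius compatibility law
`Δ ∘ m = (m ⊗ id) ∘ (id ⊗ Δ) = (id ⊗ m) ∘ (Δ ⊗ id)` for the Bar-Natan
Frobenius algebra, where `m = LinearMap.mul' R2 BN` is the multiplication map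
and the associator isomorphisms are used to identify triple tensor products. -/
theorem barNatan_frobenius_law
    (Δ : BN →ₗ[R2] BN ⊗[R2] BN)
    (hΔ1 : Δ 1 = (1 : BN) ⊗ₜ[R2] Xa + Xa ⊗ₜ[R2] (1 : BN) + Qe • ((1 : BN) ⊗ₜ[R2] (1 : BN)))
    (hΔX : Δ Xa = Xa ⊗ₜ[R2] Xa) (z : BN ⊗[R2] BN) :
    Δ (LinearMap.mul' R2 BN z) =
      TensorProduct.map (LinearMap.mul' R2 BN) LinearMap.id
        ((TensorProduct.assoc R2 BN BN BN).symm (TensorProduct.map LinearMap.id Δ z)) ∧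
    Δ (LinearMap.mul' R2 BN z) =
      TensorProduct.map LinearMap.id (LinearMap.mul' R2 BN)
        (TensorProduct.assoc R2 BN BN BN (TensorProduct.map Δ LinearMap.id z)) :=
  ⟨apply_mul'_eq_map_mul'_id_assoc_symm (map_mul_eq_tmul_one_mul (map_Xa_mul hΔ1 hΔX)) z,
    apply_mul'_eq_map_id_mul'_assoc (map_mul_eq_mul_one_tmul (map_mul_Xa hΔ1 hΔX)) z⟩
end
end

section
/- Let {1*, X*} ⊂ Hom_R(A, R) be the R-linear dual basis of the basis {1, X} of A, and let φ : Hom_R(A, R) → A be the R-linear map determined by φ(1*) = X and φ(X*) = 1. Define the convolution product on Hom_R(A, R) by (f ★ g)(a) = (f ⊗ g)(Δ(a)) (composed with the multiplication R ⊗_R R → R). Then φ is bijective, φ(ε) = 1, and φ(f ★ g) = φ(f)·φ(g) for all f, g ∈ Hom_R(A, R); that is, φ is an isomorphism of R-algebras from the convolution algebra (Hom_R(A, R), ★, ε) to A. -/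
open Polynomial TensorProduct

noncomputable section

/-!
Both sides are free of rank two: `φ` sends the dual basis `{1*, X*}` to the basis `{X, 1}`,
so it is bijective. Since `ε = X*`, `φ ε = 1`. Writing `φ f = f(1)·X + f(X)·1`, the
coproduct gives `(f ★ g)(X) = f(X) g(X)` and `(f ★ g)(1) = f(1) g(X) + f(X) g(1) + Q f(1) g(1)`,
which are exactly the coefficients of `φ f · φ g` once `X² = Q·X` is used.
-/

theorem Module.Basis.bijective_of_apply_eq {ι ι' R M N : Type*} [Semiring R]
    [AddCommMonoid M] [Module R M] [AddCommMonoid N] [Module R N]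
    (b : Module.Basis ι R M) (b' : Module.Basis ι' R N) (e : ι ≃ ι') (φ : M →ₗ[R] N)
    (h : ∀ i, φ (b i) = b' (e i)) : Function.Bijective φ := by
  have hφ : φ = (b.equiv b' e).toLinearMap := b.ext fun i => by simp [h]
  exact hφ ▸ (b.equiv b' e).bijective

namespace BN

theorem BNpoly_monic : BNpoly.Monic :=
  monic_X_pow_sub ((degree_C_mul_X_le Qe).trans_lt (by norm_num))

theorem BNpoly_natDegree : BNpoly.natDegree = 2 := by
  unfold BNpoly
  compute_degree!

def basisOneX : Module.Basis (Fin 2) R2 BN :=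
  (AdjoinRoot.powerBasis' BNpoly_monic).basis.reindex
    (finCongr (by rw [AdjoinRoot.powerBasis'_dim, BNpoly_natDegree]))

@[simp]
theorem basisOneX_zero : basisOneX 0 = 1 := by
  simp [basisOneX]

@[simp]
theorem basisOneX_one : basisOneX 1 = Xa := by
  simp [basisOneX, Xa, AdjoinRoot.powerBasis'_gen]

theorem Xa_mul_self : Xa * Xa = Qe • Xa := by
  have h : AdjoinRoot.mk BNpoly (X ^ 2 - C Qe * X) = 0 := AdjoinRoot.mk_self
  rw [map_sub, map_mul, map_pow, sub_eq_zero, AdjoinRoot.mk_X, AdjoinRoot.mk_C] at h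
  rw [← sq, Xa, h]
  exact (Algebra.smul_def _ _).symm

theorem dual_ext {f g : BN →ₗ[R2] R2} (h1 : f 1 = g 1) (hX : f Xa = g Xa) : f = g :=
  basisOneX.ext fun i => by fin_cases i <;> simpa

theorem eq_dualBasis_zero {f : BN →ₗ[R2] R2} (h1 : f 1 = 1) (hX : f Xa = 0) :
    f = basisOneX.dualBasis 0 := by
  refine dual_ext ?_ ?_
  · simpa [h1] using (basisOneX.dualBasis_apply_self 0 0).symm
  · simpa [hX] using (basisOneX.dualBasis_apply_self 0 1).symm

theorem eq_dualBasis_one {f : BN →ₗ[R2] R2} (h1 : f 1 = 0) (hX : f Xa = 1) :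
    f = basisOneX.dualBasis 1 := by
  refine dual_ext ?_ ?_
  · simpa [h1] using (basisOneX.dualBasis_apply_self 1 0).symm
  · simpa [hX] using (basisOneX.dualBasis_apply_self 1 1).symm

theorem smul_Xa_add_smul_one_mul (a b c d : R2) :
    (a • Xa + b • 1) * (c • Xa + d • 1) =
      (a * d + b * c + Qe * (a * c)) • Xa + (b * d) • 1 := by
  simp only [add_mul, mul_add, smul_mul_smul_comm, Xa_mul_self, mul_one, one_mul, smul_smul]
  module

end BN

open BN in
/-- the map `φ : Hom_R(A,R) → A` with `φ(1*) = X`, `φ(X*) = 1`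
is an isomorphism of `R`-algebras from the convolution algebra
`(Hom_R(A,R), ★, ε)` (where `(f ★ g)(a) = (f ⊗ g)(Δ a)` followed by
multiplication `R ⊗ R → R`) to `A`: it is bijective, sends the convolution
unit `ε` to `1`, and is multiplicative. -/
theorem barNatan_selfDual_algebra
    (ε : BN →ₗ[R2] R2) (hε1 : ε 1 = 0) (hεX : ε Xa = 1)
    (Δ : BN →ₗ[R2] BN ⊗[R2] BN)
    (hΔ1 : Δ 1 = (1 : BN) ⊗ₜ[R2] Xa + Xa ⊗ₜ[R2] (1 : BN) + Qe • ((1 : BN) ⊗ₜ[R2] (1 : BN)))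
    (hΔX : Δ Xa = Xa ⊗ₜ[R2] Xa)
    -- the dual basis functionals `1*` and `X*` of the basis `{1, X}` of `A`
    (oneDual : BN →ₗ[R2] R2) (h11 : oneDual 1 = 1) (h1X : oneDual Xa = 0)
    (XDual : BN →ₗ[R2] R2) (hX1 : XDual 1 = 0) (hXX : XDual Xa = 1)
    -- the `R`-linear map `φ` determined by `φ(1*) = X` and `φ(X*) = 1`
    (φ : (BN →ₗ[R2] R2) →ₗ[R2] BN) (hφ1 : φ oneDual = Xa) (hφX : φ XDual = 1) :
    Function.Bijective φ ∧ φ ε = 1 ∧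
      ∀ f g : BN →ₗ[R2] R2,
        φ (((LinearMap.mul' R2 R2).comp (TensorProduct.map f g)).comp Δ) = φ f * φ g := by
  have hφ (f : BN →ₗ[R2] R2) : φ f = f 1 • Xa + f Xa • 1 := by
    have hf : f = f 1 • oneDual + f Xa • XDual :=
      dual_ext (by simp [h11, hX1]) (by simp [h1X, hXX])
    conv_lhs => rw [hf]
    rw [map_add, map_smul, map_smul, hφ1, hφX]
  refine ⟨?_, ?_, fun f g => ?_⟩
  · refine basisOneX.dualBasis.bijective_of_apply_eq basisOneX (Equiv.swap 0 1) φ fun i => ?_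
    fin_cases i
    · simpa [← eq_dualBasis_zero h11 h1X] using hφ1
    · simpa [← eq_dualBasis_one hX1 hXX] using hφX
  · rw [eq_dualBasis_one hε1 hεX, ← eq_dualBasis_one hX1 hXX, hφX]
  · rw [hφ, hφ f, hφ g, smul_Xa_add_smul_one_mul]
    simp [hΔ1, hΔX]
end
end
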